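/- Fix a real number N > 1 and D ∈ (0,π], set ε := π − D and λ_D := ∫_0^D h_N(t) dt, and assume ε < ω_N. Let h be a CD(N−1,N) density on [0,D] with ∫_0^D h(t) dt = 1. Then for every t ∈ (0,D) it holds (ω_N/(ω_N·λ_D + ε)) · min{h_N(t), h_N(t+ε)} ≤ h(t) ≤ (ω_N/(ω_N − ε)) · max{h_N(t), h_N(t+ε)}. -/

import Mathlib

open Real MeasureTheory Set Filter

/-- `ω_N = ∫_0^π sin^{N-1}(t) dt`. -/
noncomputable def omegaN (N : ℝ) : ℝ := ∫ t in (0:ℝ)..π, Real.sin t ^ (N - 1)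

/-- The model density `h_N(t) = sin^{N-1}(t)/ω_N`. -/
noncomputable def hmodel (N t : ℝ) : ℝ := Real.sin t ^ (N - 1) / omegaN N

/-- `h` is a `CD(N-1,N)` density on `[0,D]`. -/
def IsCDDensity (N D : ℝ) (h : ℝ → ℝ) : Prop :=
  (∀ t ∈ Set.Icc (0:ℝ) D, 0 ≤ h t) ∧
  ∀ t₀ t₁ s : ℝ, 0 ≤ t₀ → t₀ ≤ t₁ → t₁ ≤ D → s ∈ Set.Icc (0:ℝ) 1 →
    Real.sin ((1 - s) * (t₁ - t₀)) * h t₀ ^ (1 / (N - 1))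
      + Real.sin (s * (t₁ - t₀)) * h t₁ ^ (1 / (N - 1))
    ≤ Real.sin (t₁ - t₀) * h ((1 - s) * t₀ + s * t₁) ^ (1 / (N - 1))

/-!
The CD condition, written as a three-point inequality and with one of its two nonnegative terms
dropped, says that `h(x) / sin^{N-1}(x)` is nonincreasing and `h(x) / sin^{N-1}(D - x)`
nondecreasing. Hence on each side of a point `t` the density `h` is squeezed between `h(t)` times
suitable translates or reflections of `sin^{N-1}`, rescaled by `min` or `max` of
`sin^{N-1}(t)` and `sin^{N-1}(D - t)`. Integrating over `[0, D]` and using `∫ h = 1` bounds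
`h(t)`; the model integrals that appear differ from `ω_N` and `ω_N λ_D` by at most `ε = π - D`,
since `sin^{N-1} ≤ 1` and `sin^{N-1}` is symmetric about `π / 2`.
-/

lemma rpow_mul_le_rpow_mul_of_mul_rpow_le {q a b x y : ℝ} (hq : 0 < q) (ha : 0 ≤ a)
    (hb : 0 ≤ b) (hx : 0 ≤ x) (hy : 0 ≤ y) (h : a * x ^ (1 / q) ≤ b * y ^ (1 / q)) :
    a ^ q * x ≤ b ^ q * y := by
  have := rpow_le_rpow (by positivity) h hq.le
  rwa [mul_rpow ha (by positivity), mul_rpow hb (by positivity), one_div,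
    rpow_inv_rpow hx hq.ne', rpow_inv_rpow hy hq.ne'] at this

lemma mul_div_le_of_mul_le_mul {a c p M y : ℝ} (ha : 0 ≤ a) (hc : 0 ≤ c) (hp : 0 < p)
    (hpM : p ≤ M) (h : a * c ≤ p * y) : a * (c / M) ≤ y :=
  calc a * (c / M) ≤ a * (c / p) := by gcongr
    _ = a * c / p := (mul_div_assoc ..).symm
    _ ≤ y := by rw [div_le_iff₀ hp]; linarith

lemma le_mul_div_of_mul_le_mul {a c p m y : ℝ} (ha : 0 ≤ a) (hc : 0 ≤ c) (hm : 0 < m)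
    (hmp : m ≤ p) (h : p * y ≤ a * c) : y ≤ a * (c / m) :=
  calc y ≤ a * c / p := by rw [le_div_iff₀ (hm.trans_le hmp)]; linarith
    _ = a * (c / p) := mul_div_assoc ..
    _ ≤ a * (c / m) := by gcongr

section SinRpow

variable {r : ℝ}

lemma continuous_sin_rpow (hr : 0 ≤ r) : Continuous fun x => sin x ^ r :=
  continuous_sin.rpow_const fun _ => Or.inr hr

lemma sin_rpow_nonneg {x : ℝ} (hx₀ : 0 ≤ x) (hxπ : x ≤ π) : 0 ≤ sin x ^ r :=
  rpow_nonneg (sin_nonneg_of_nonneg_of_le_pi hx₀ hxπ) r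

lemma sin_rpow_pos {x : ℝ} (hx₀ : 0 < x) (hxπ : x < π) : 0 < sin x ^ r :=
  rpow_pos_of_pos (sin_pos_of_pos_of_lt_pi hx₀ hxπ) r

lemma integral_sin_rpow_nonneg {a b : ℝ} (ha : 0 ≤ a) (hab : a ≤ b) (hb : b ≤ π) :
    0 ≤ ∫ x in a..b, sin x ^ r :=
  intervalIntegral.integral_nonneg hab fun _ hx =>
    sin_rpow_nonneg (ha.trans hx.1) (hx.2.trans hb)

lemma integral_sin_rpow_le_sub (hr : 0 ≤ r) {a b : ℝ} (ha : 0 ≤ a) (hab : a ≤ b)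
    (hb : b ≤ π) :
    ∫ x in a..b, sin x ^ r ≤ b - a :=
  calc ∫ x in a..b, sin x ^ r ≤ ∫ _ in a..b, (1 : ℝ) :=
        intervalIntegral.integral_mono_on hab ((continuous_sin_rpow hr).intervalIntegrable a b)
          intervalIntegrable_const fun x hx => rpow_le_one
            (sin_nonneg_of_nonneg_of_le_pi (ha.trans hx.1) (hx.2.trans hb)) (sin_le_one x) hr
    _ = b - a := by simp

lemma integral_sin_rpow_pi_sub (a b : ℝ) :
    ∫ x in (π - b)..(π - a), sin x ^ r = ∫ x in a..b, sin x ^ r := by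
  simpa [sin_pi_sub] using (intervalIntegral.integral_comp_sub_left (fun x => sin x ^ r) π).symm

lemma integral_sin_rpow_pos (hr : 0 ≤ r) {b : ℝ} (hb₀ : 0 < b) (hbπ : b ≤ π) :
    0 < ∫ x in (0 : ℝ)..b, sin x ^ r :=
  intervalIntegral.intervalIntegral_pos_of_pos_on
    ((continuous_sin_rpow hr).intervalIntegrable 0 b)
    (fun _ hx => sin_rpow_pos hx.1 (hx.2.trans_le hbπ)) hb₀

lemma integral_sin_rpow_zero_pi_le (hr : 0 ≤ r) {t D : ℝ} (ht : 0 ≤ t) (htD : t ≤ D)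
    (hD : D ≤ π) :
    ∫ x in (0 : ℝ)..π, sin x ^ r
      ≤ (∫ x in (0 : ℝ)..t, sin x ^ r) + (∫ x in (0 : ℝ)..(D - t), sin x ^ r) + (π - D) := by
  have hi := (continuous_sin_rpow hr).intervalIntegrable (μ := volume)
  have split₁ := intervalIntegral.integral_add_adjacent_intervals (hi 0 (D - t)) (hi (D - t) π)
  have reflect : ∫ x in (D - t)..π, sin x ^ r = ∫ x in (0 : ℝ)..(t + (π - D)), sin x ^ r := by
    rw [← integral_sin_rpow_pi_sub]; congr 1 <;> ring
  have split₂ := intervalIntegral.integral_add_adjacent_intervals (hi 0 t) (hi t (t + (π - D)))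
  have short := integral_sin_rpow_le_sub hr ht (le_add_of_nonneg_right (sub_nonneg.2 hD))
    (by linarith : t + (π - D) ≤ π)
  linarith

lemma integral_sin_rpow_add_integral_le (hr : 0 ≤ r) {t D : ℝ} (ht : 0 ≤ t) (htD : t ≤ D)
    (hD : D ≤ π) :
    (∫ x in (D - t)..D, sin x ^ r) + (∫ x in t..D, sin x ^ r)
      ≤ (∫ x in (0 : ℝ)..D, sin x ^ r) + (π - D) := by
  have hi := (continuous_sin_rpow hr).intervalIntegrable (μ := volume)
  have split₁ := intervalIntegral.integral_add_adjacent_intervals (hi 0 (D - t)) (hi (D - t) D)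
  have reflect := integral_sin_rpow_pi_sub (r := r) t D
  have split₂ :=
    intervalIntegral.integral_add_adjacent_intervals (hi 0 (π - D)) (hi (π - D) (π - t))
  have split₃ :=
    intervalIntegral.integral_add_adjacent_intervals (hi 0 (D - t)) (hi (D - t) (π - t))
  have short := integral_sin_rpow_le_sub hr (sub_nonneg.2 htD) (by linarith : D - t ≤ π - t)
    (by linarith : π - t ≤ π)
  have nonneg :=
    integral_sin_rpow_nonneg (r := r) le_rfl (sub_nonneg.2 hD) (by linarith : π - D ≤ π)
  linarith

end SinRpow

lemma omegaN_pos {N : ℝ} (hN : 1 ≤ N) : 0 < omegaN N :=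
  integral_sin_rpow_pos (sub_nonneg.2 hN) pi_pos le_rfl

lemma hmodel_pi_sub (N x : ℝ) : hmodel N (π - x) = hmodel N x := by
  rw [hmodel, hmodel, sin_pi_sub]

lemma omegaN_mul_integral_hmodel {N : ℝ} (hN : 1 ≤ N) (a b : ℝ) :
    omegaN N * ∫ x in a..b, hmodel N x = ∫ x in a..b, sin x ^ (N - 1) := by
  simp only [hmodel, intervalIntegral.integral_div]
  field_simp [(omegaN_pos hN).ne']

namespace IsCDDensity

variable {N D : ℝ} {h : ℝ → ℝ}

theorem three_point (hcd : IsCDDensity N D h) {t₀ u t₁ : ℝ} (h₀ : 0 ≤ t₀) (h₀u : t₀ ≤ u)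
    (hu₁ : u ≤ t₁) (h₁ : t₁ ≤ D) :
    sin (t₁ - u) * h t₀ ^ (1 / (N - 1)) + sin (u - t₀) * h t₁ ^ (1 / (N - 1))
      ≤ sin (t₁ - t₀) * h u ^ (1 / (N - 1)) := by
  obtain rfl | hlt := (h₀u.trans hu₁).eq_or_lt
  · obtain rfl := le_antisymm hu₁ h₀u
    simp
  have hne : t₁ - t₀ ≠ 0 := sub_ne_zero.2 hlt.ne'
  have hs : (u - t₀) / (t₁ - t₀) ∈ Icc (0 : ℝ) 1 :=
    ⟨div_nonneg (by linarith) (by linarith), (div_le_one (by linarith)).2 (by linarith)⟩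
  have := hcd.2 t₀ t₁ _ h₀ (h₀u.trans hu₁) h₁ hs
  rwa [show (1 - (u - t₀) / (t₁ - t₀)) * (t₁ - t₀) = t₁ - u by field_simp; ring,
    div_mul_cancel₀ _ hne,
    show (1 - (u - t₀) / (t₁ - t₀)) * t₀ + (u - t₀) / (t₁ - t₀) * t₁ = u by field_simp; ring]
    at this

theorem sin_rpow_mul_right_le (hcd : IsCDDensity N D h) (hN : 1 < N) (hD : D ≤ π)
    {t₀ u t₁ : ℝ} (h₀ : 0 ≤ t₀) (h₀u : t₀ ≤ u) (hu₁ : u ≤ t₁) (h₁ : t₁ ≤ D) :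
    sin (u - t₀) ^ (N - 1) * h t₁ ≤ sin (t₁ - t₀) ^ (N - 1) * h u := by
  have hdrop := mul_nonneg (sin_nonneg_of_nonneg_of_le_pi (sub_nonneg.2 hu₁) (by linarith))
    (rpow_nonneg (hcd.1 t₀ ⟨h₀, by linarith⟩) (1 / (N - 1)))
  refine rpow_mul_le_rpow_mul_of_mul_rpow_le (by linarith)
    (sin_nonneg_of_nonneg_of_le_pi (sub_nonneg.2 h₀u) (by linarith))
    (sin_nonneg_of_nonneg_of_le_pi (by linarith) (by linarith))
    (hcd.1 t₁ ⟨by linarith, h₁⟩) (hcd.1 u ⟨by linarith, by linarith⟩) ?_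
  linarith [hcd.three_point h₀ h₀u hu₁ h₁]

theorem sin_rpow_mul_left_le (hcd : IsCDDensity N D h) (hN : 1 < N) (hD : D ≤ π)
    {t₀ u t₁ : ℝ} (h₀ : 0 ≤ t₀) (h₀u : t₀ ≤ u) (hu₁ : u ≤ t₁) (h₁ : t₁ ≤ D) :
    sin (t₁ - u) ^ (N - 1) * h t₀ ≤ sin (t₁ - t₀) ^ (N - 1) * h u := by
  have hdrop := mul_nonneg (sin_nonneg_of_nonneg_of_le_pi (sub_nonneg.2 h₀u) (by linarith))
    (rpow_nonneg (hcd.1 t₁ ⟨by linarith, h₁⟩) (1 / (N - 1)))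
  refine rpow_mul_le_rpow_mul_of_mul_rpow_le (by linarith)
    (sin_nonneg_of_nonneg_of_le_pi (sub_nonneg.2 hu₁) (by linarith))
    (sin_nonneg_of_nonneg_of_le_pi (by linarith) (by linarith))
    (hcd.1 t₀ ⟨h₀, by linarith⟩) (hcd.1 u ⟨by linarith, by linarith⟩) ?_
  linarith [hcd.three_point h₀ h₀u hu₁ h₁]

theorem integral_add_integral_mul_div_max_le (hcd : IsCDDensity N D h) (hN : 1 < N)
    (hD : D ≤ π) (hh : IntervalIntegrable h volume 0 D) {t : ℝ} (ht : t ∈ Ioo 0 D) :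
    ((∫ x in (0 : ℝ)..t, sin x ^ (N - 1)) + ∫ x in (0 : ℝ)..(D - t), sin x ^ (N - 1))
        * (h t / max (sin t ^ (N - 1)) (sin (D - t) ^ (N - 1)))
      ≤ ∫ x in (0 : ℝ)..D, h x := by
  obtain ⟨ht₀, htD⟩ := ht
  set c := h t / max (sin t ^ (N - 1)) (sin (D - t) ^ (N - 1))
  have hht : 0 ≤ h t := hcd.1 t ⟨ht₀.le, htD.le⟩
  have hg : Continuous fun x => sin x ^ (N - 1) * c :=
    (continuous_sin_rpow (by linarith)).mul continuous_const
  have hh₁ := hh.mono_set (uIcc_subset_uIcc left_mem_uIcc (mem_uIcc_of_le ht₀.le htD.le))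
  have hh₂ := hh.mono_set (uIcc_subset_uIcc (mem_uIcc_of_le ht₀.le htD.le) right_mem_uIcc)
  have hleft : (∫ x in (0 : ℝ)..t, sin x ^ (N - 1)) * c ≤ ∫ x in (0 : ℝ)..t, h x := by
    rw [← intervalIntegral.integral_mul_const]
    refine intervalIntegral.integral_mono_on ht₀.le (hg.intervalIntegrable _ _) hh₁
      fun x hx => mul_div_le_of_mul_le_mul (sin_rpow_nonneg hx.1 (by linarith [hx.2])) hht
        (sin_rpow_pos ht₀ (by linarith)) (le_max_left _ _) ?_
    simpa using hcd.sin_rpow_mul_right_le hN hD le_rfl hx.1 hx.2 htD.le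
  have hright : (∫ x in (0 : ℝ)..(D - t), sin x ^ (N - 1)) * c ≤ ∫ x in t..D, h x := by
    have reflect :
        ∫ x in t..D, sin (D - x) ^ (N - 1) = ∫ x in (0 : ℝ)..(D - t), sin x ^ (N - 1) := by
      simpa using intervalIntegral.integral_comp_sub_left (fun x => sin x ^ (N - 1)) D (a := t) (b := D)
    rw [← reflect, ← intervalIntegral.integral_mul_const]
    refine intervalIntegral.integral_mono_on htD.le
      ((hg.comp (continuous_sub_left D)).intervalIntegrable _ _) hh₂
      fun x hx => mul_div_le_of_mul_le_mul
        (sin_rpow_nonneg (by linarith [hx.2]) (by linarith [hx.1])) hht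
        (sin_rpow_pos (by linarith) (by linarith)) (le_max_right _ _) ?_
    exact hcd.sin_rpow_mul_left_le hN hD ht₀.le hx.1 hx.2 le_rfl
  rw [← intervalIntegral.integral_add_adjacent_intervals hh₁ hh₂, add_mul]
  exact add_le_add hleft hright

theorem integral_le_integral_add_integral_mul_div_min (hcd : IsCDDensity N D h) (hN : 1 < N)
    (hD : D ≤ π) (hh : IntervalIntegrable h volume 0 D) {t : ℝ} (ht : t ∈ Ioo 0 D) :
    ∫ x in (0 : ℝ)..D, h x
      ≤ ((∫ x in (D - t)..D, sin x ^ (N - 1)) + ∫ x in t..D, sin x ^ (N - 1))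
        * (h t / min (sin t ^ (N - 1)) (sin (D - t) ^ (N - 1))) := by
  obtain ⟨ht₀, htD⟩ := ht
  set c := h t / min (sin t ^ (N - 1)) (sin (D - t) ^ (N - 1))
  have hht : 0 ≤ h t := hcd.1 t ⟨ht₀.le, htD.le⟩
  have hm : 0 < min (sin t ^ (N - 1)) (sin (D - t) ^ (N - 1)) :=
    lt_min (sin_rpow_pos ht₀ (by linarith)) (sin_rpow_pos (by linarith) (by linarith))
  have hg : Continuous fun x => sin x ^ (N - 1) * c :=
    (continuous_sin_rpow (by linarith)).mul continuous_const
  have hh₁ := hh.mono_set (uIcc_subset_uIcc left_mem_uIcc (mem_uIcc_of_le ht₀.le htD.le))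
  have hh₂ := hh.mono_set (uIcc_subset_uIcc (mem_uIcc_of_le ht₀.le htD.le) right_mem_uIcc)
  have hleft : ∫ x in (0 : ℝ)..t, h x ≤ (∫ x in (D - t)..D, sin x ^ (N - 1)) * c := by
    have reflect :
        ∫ x in (0 : ℝ)..t, sin (D - x) ^ (N - 1) = ∫ x in (D - t)..D, sin x ^ (N - 1) := by
      simpa using intervalIntegral.integral_comp_sub_left (fun x => sin x ^ (N - 1)) D (a := 0)
    rw [← reflect, ← intervalIntegral.integral_mul_const]
    refine intervalIntegral.integral_mono_on ht₀.le hh₁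
      ((hg.comp (continuous_sub_left D)).intervalIntegrable _ _)
      fun x hx => le_mul_div_of_mul_le_mul
        (sin_rpow_nonneg (by linarith [hx.2]) (by linarith [hx.1])) hht hm (min_le_right _ _) ?_
    exact hcd.sin_rpow_mul_left_le hN hD hx.1 hx.2 htD.le le_rfl
  have hright : ∫ x in t..D, h x ≤ (∫ x in t..D, sin x ^ (N - 1)) * c := by
    rw [← intervalIntegral.integral_mul_const]
    refine intervalIntegral.integral_mono_on htD.le hh₂ (hg.intervalIntegrable _ _)
      fun x hx => le_mul_div_of_mul_le_mul
        (sin_rpow_nonneg (by linarith [hx.1]) (by linarith [hx.2])) hht hm (min_le_left _ _) ?_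
    simpa using hcd.sin_rpow_mul_right_le hN hD le_rfl ht₀.le hx.1 hx.2
  rw [← intervalIntegral.integral_add_adjacent_intervals hh₁ hh₂, add_mul]
  exact add_le_add hleft hright

end IsCDDensity

/-- Proposition A.3 (Proposition `P:estimatedensity`): two-sided pointwise comparison of
a normalized `CD(N-1,N)` density on `[0,D]` with the model density, with
`ε = π - D` and `λ_D = ∫_0^D h_N`. -/
theorem cd_density_pointwise_estimate (N D : ℝ) (hN1 : 1 < N) (hD : D ∈ Set.Ioc (0:ℝ) π)
    (hε : π - D < omegaN N)
    (h : ℝ → ℝ) (hcd : IsCDDensity N D h) (hint : (∫ t in (0:ℝ)..D, h t) = 1)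
    (t : ℝ) (ht : t ∈ Set.Ioo (0:ℝ) D) :
    (omegaN N / (omegaN N * (∫ s in (0:ℝ)..D, hmodel N s) + (π - D))) *
        min (hmodel N t) (hmodel N (t + (π - D))) ≤ h t ∧
    h t ≤ (omegaN N / (omegaN N - (π - D))) *
        max (hmodel N t) (hmodel N (t + (π - D))) := by
  have hDπ : D ≤ π := hD.2
  have hr : 0 ≤ N - 1 := by linarith
  have hω := omegaN_pos hN1.le
  set m := min (sin t ^ (N - 1)) (sin (D - t) ^ (N - 1))
  set M := max (sin t ^ (N - 1)) (sin (D - t) ^ (N - 1))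
  have hm : 0 < m := lt_min (sin_rpow_pos ht.1 (ht.2.trans_le hDπ))
    (sin_rpow_pos (sub_pos.2 ht.2) (by linarith [ht.1]))
  have hM : 0 < M := hm.trans_le min_le_max
  have hht : 0 ≤ h t := hcd.1 t (Ioo_subset_Icc_self ht)
  have hh := intervalIntegral.intervalIntegrable_of_integral_ne_zero (hint ▸ one_ne_zero)
  have hupper := hcd.integral_add_integral_mul_div_max_le hN1 hDπ hh ht
  have hlower := hcd.integral_le_integral_add_integral_mul_div_min hN1 hDπ hh ht
  rw [hint, mul_div_assoc', div_le_iff₀ hM] at hupper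
  rw [hint, mul_div_assoc', le_div_iff₀ hm] at hlower
  have hω_le : omegaN N ≤ _ := integral_sin_rpow_zero_pi_le hr ht.1.le ht.2.le hDπ
  have hZ_le := integral_sin_rpow_add_integral_le hr ht.1.le ht.2.le hDπ
  have hZ_pos := integral_sin_rpow_pos hr hD.1 hDπ
  have hcancel (K x : ℝ) : omegaN N / K * (x / omegaN N) = x / K := by field_simp
  rw [omegaN_mul_integral_hmodel hN1.le, show t + (π - D) = π - (D - t) by ring, hmodel_pi_sub,
    hmodel, hmodel, min_div_div_right hω.le, max_div_div_right hω.le, hcancel, hcancel]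
  constructor
  · rw [div_le_iff₀ (by linarith)]
    nlinarith
  · rw [le_div_iff₀ (by linarith)]
    nlinarith
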